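/- For the soft threshold risk R(μ,λ) = E(s_λ(Z+μ) - μ)² with Z standard normal, the partial derivative in μ satisfies ∂R(μ,λ)/∂μ = 2μ P{|Z+μ| ≤ λ}; consequently R(μ,λ) ≤ R(0,λ) + min(μ², λ²+1) for all μ and all λ ≥ 0. -/

import Mathlib

open MeasureTheory Set

noncomputable def stdPDF (x : ℝ) : ℝ := Real.exp (-x^2/2) / Real.sqrt (2*Real.pi)

/-- Soft threshold function s_λ(x) = sgn(x)(|x|-λ)_+. -/
noncomputable def soft (lam x : ℝ) : ℝ := Real.sign x * max (|x| - lam) 0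

/-- Soft threshold risk R(μ,λ) = ∫ (s_λ(x+μ)-μ)² φ(x) dx. -/
noncomputable def softRisk (mu lam : ℝ) : ℝ := ∫ x, (soft lam (x + mu) - mu)^2 * stdPDF x

/-!
Cutting the line at `-λ - μ` and `λ - μ`, the risk is
`∫_{x > λ-μ} (x-λ)² φ + ∫_{x ≤ -λ-μ} (x+λ)² φ + μ² P(-λ-μ < Z ≤ λ-μ)`.
When this is differentiated in `μ` the boundary terms cancel, because the integrands agree at the
cut points, and only `2μ P(|Z+μ| ≤ λ)` survives.

For the bound, `(s_λ(x+μ) - μ)² ≤ s_λ(x)² + μ²` pointwise gives `R(μ,λ) ≤ R(0,λ) + μ²`.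
Writing `s_λ(x+μ) - μ = x + d(x+μ)` with `d = s_λ - id` antitone and `|d| ≤ λ`, pairing `x` with
`-x` makes the cross term `x (d(x+μ) - d(-x+μ))` nonpositive, so `R(μ,λ) ≤ E Z² + λ² = λ² + 1`.
-/

open ProbabilityTheory

lemma stdPDF_eq_gaussianPDFReal : stdPDF = gaussianPDFReal 0 1 := by
  ext x
  simp [stdPDF, gaussianPDFReal, div_eq_inv_mul]

lemma stdPDF_nonneg (x : ℝ) : 0 ≤ stdPDF x :=
  stdPDF_eq_gaussianPDFReal ▸ gaussianPDFReal_nonneg 0 1 x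

lemma stdPDF_neg (x : ℝ) : stdPDF (-x) = stdPDF x := by
  simp [stdPDF]

@[fun_prop]
lemma continuous_stdPDF : Continuous stdPDF := by
  unfold stdPDF
  fun_prop

lemma integrable_stdPDF : Integrable stdPDF :=
  stdPDF_eq_gaussianPDFReal ▸ integrable_gaussianPDFReal 0 1

lemma integral_stdPDF : ∫ x, stdPDF x = 1 :=
  stdPDF_eq_gaussianPDFReal ▸ integral_gaussianPDFReal_eq_one 0 one_ne_zero

lemma integral_sq_mul_stdPDF : ∫ x, x ^ 2 * stdPDF x = 1 := by
  have h := variance_fun_id_gaussianReal (μ := 0) (v := 1)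
  rw [variance_eq_integral measurable_id'.aemeasurable, integral_id_gaussianReal,
    integral_gaussianReal_eq_integral_smul one_ne_zero] at h
  simpa [stdPDF_eq_gaussianPDFReal, mul_comm] using h

lemma integrable_sq_mul_stdPDF : Integrable fun x => x ^ 2 * stdPDF x :=
  Integrable.of_integral_ne_zero (by rw [integral_sq_mul_stdPDF]; exact one_ne_zero)

lemma integrable_sq_mul_stdPDF_of_abs_sub_le {g : ℝ → ℝ} (hg : Continuous g) {c : ℝ}
    (hc : ∀ x, |g x - x| ≤ c) : Integrable fun x => g x ^ 2 * stdPDF x := by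
  refine ((integrable_sq_mul_stdPDF.add (integrable_stdPDF.const_mul (c ^ 2))).const_mul 2).mono'
    (by fun_prop) (ae_of_all _ fun x => ?_)
  have hgx : g x ^ 2 ≤ 2 * (x ^ 2 + c ^ 2) := by
    nlinarith [sq_abs (g x - x), abs_nonneg (g x - x), hc x, sq_nonneg (g x - 2 * x)]
  rw [Real.norm_eq_abs, abs_of_nonneg (mul_nonneg (sq_nonneg _) (stdPDF_nonneg x))]
  simpa only [Pi.add_apply, mul_add, add_mul, mul_assoc] using
    mul_le_mul_of_nonneg_right hgx (stdPDF_nonneg x)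

lemma integrable_sub_sq_mul_stdPDF (a : ℝ) : Integrable fun x => (x - a) ^ 2 * stdPDF x :=
  integrable_sq_mul_stdPDF_of_abs_sub_le (continuous_sub_right a) fun x => by
    rw [sub_sub_cancel_left, abs_neg]

lemma integrable_add_sq_mul_stdPDF (a : ℝ) : Integrable fun x => (x + a) ^ 2 * stdPDF x :=
  integrable_sq_mul_stdPDF_of_abs_sub_le (continuous_add_const a) fun x => by
    rw [add_sub_cancel_left]

lemma HasDerivAt.integral_Iic {h : ℝ → ℝ} (hc : Continuous h) (hi : Integrable h) {f : ℝ → ℝ}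
    {f' t : ℝ} (hf : HasDerivAt f f' t) :
    HasDerivAt (fun s => ∫ x in Iic (f s), h x) (h (f t) * f') t := by
  have hsplit :
      (fun b => ∫ x in Iic b, h x) = fun b => (∫ x in Iic 0, h x) + ∫ x in 0..b, h x := by
    ext b
    rw [← intervalIntegral.integral_Iic_sub_Iic hi.integrableOn hi.integrableOn]
    ring
  have hG : HasDerivAt (fun b => ∫ x in Iic b, h x) (h (f t)) (f t) := by
    rw [hsplit]
    exact (intervalIntegral.integral_hasDerivAt_right hi.intervalIntegrable
      hc.stronglyMeasurable.stronglyMeasurableAtFilter hc.continuousAt).const_add _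
  exact hG.comp t hf

section SoftThreshold

variable {lam : ℝ}

lemma soft_eq_sub_max_min (hlam : 0 ≤ lam) (x : ℝ) :
    soft lam x = x - max (-lam) (min lam x) := by
  unfold soft
  rcases lt_trichotomy x 0 with hx | rfl | hx
  · rw [Real.sign_of_neg hx, abs_of_neg hx]
    simp only [max_def, min_def]
    split_ifs <;> linarith
  · simp [hlam]
  · rw [Real.sign_of_pos hx, abs_of_pos hx]
    simp only [max_def, min_def]
    split_ifs <;> linarith

lemma continuous_soft (hlam : 0 ≤ lam) : Continuous (soft lam) := by
  simp only [funext (soft_eq_sub_max_min hlam)]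
  fun_prop

lemma abs_soft_sub_self_le (hlam : 0 ≤ lam) (t : ℝ) : |soft lam t - t| ≤ lam := by
  rw [soft_eq_sub_max_min hlam, sub_sub_cancel_left, abs_neg, abs_le]
  exact ⟨le_max_left _ _, max_le (by linarith) (min_le_left _ _)⟩

lemma antitone_soft_sub_self (hlam : 0 ≤ lam) : Antitone fun t => soft lam t - t := by
  intro a b hab
  simp only [soft_eq_sub_max_min hlam, sub_sub_cancel_left, neg_le_neg_iff]
  gcongr

lemma soft_of_lt (hlam : 0 ≤ lam) {x : ℝ} (hx : lam < x) : soft lam x = x - lam := by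
  rw [soft_eq_sub_max_min hlam, min_eq_left hx.le, max_eq_right (by linarith)]

lemma soft_of_le_neg (hlam : 0 ≤ lam) {x : ℝ} (hx : x ≤ -lam) : soft lam x = x + lam := by
  rw [soft_eq_sub_max_min hlam, min_eq_right (by linarith), max_eq_left hx, sub_neg_eq_add]

lemma soft_of_abs_le {x : ℝ} (hx : |x| ≤ lam) : soft lam x = 0 := by
  rw [soft, max_eq_right (by linarith), mul_zero]

lemma sq_soft_add_sub_le (hlam : 0 ≤ lam) (x mu : ℝ) :
    (soft lam (x + mu) - mu) ^ 2 ≤ soft lam x ^ 2 + mu ^ 2 := by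
  simp only [soft_eq_sub_max_min hlam, max_def, min_def]
  split_ifs <;> nlinarith

end SoftThreshold

lemma add_sq_add_neg_add_sq_le_of_antitone {d : ℝ → ℝ} (hd : Antitone d) {c : ℝ}
    (hc : ∀ t, |d t| ≤ c) (x mu : ℝ) :
    (x + d (x + mu)) ^ 2 + (-x + d (-x + mu)) ^ 2 ≤ 2 * x ^ 2 + 2 * c ^ 2 := by
  have hcross : x * (d (x + mu) - d (-x + mu)) ≤ 0 := by
    rcases le_total 0 x with hx | hx
    · exact mul_nonpos_of_nonneg_of_nonpos hx (sub_nonpos.2 (hd (by linarith)))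
    · exact mul_nonpos_of_nonpos_of_nonneg hx (sub_nonneg.2 (hd (by linarith)))
  nlinarith [sq_abs (d (x + mu)), sq_abs (d (-x + mu)), abs_nonneg (d (x + mu)),
    abs_nonneg (d (-x + mu)), hc (x + mu), hc (-x + mu)]

section SoftRisk

variable {lam : ℝ}

lemma integrable_softRisk_integrand (hlam : 0 ≤ lam) (mu : ℝ) :
    Integrable fun x => (soft lam (x + mu) - mu) ^ 2 * stdPDF x :=
  integrable_sq_mul_stdPDF_of_abs_sub_le (by have := continuous_soft hlam; fun_prop)
    fun x => by rw [sub_sub, add_comm mu x]; exact abs_soft_sub_self_le hlam (x + mu)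

lemma soft_add_sub_sq_mul_stdPDF_eq (hlam : 0 ≤ lam) (m x : ℝ) :
    (soft lam (x + m) - m) ^ 2 * stdPDF x =
      (x - lam) ^ 2 * stdPDF x - (Iic (lam - m)).indicator (fun x => (x - lam) ^ 2 * stdPDF x) x
      + (Iic (-lam - m)).indicator (fun x => (x + lam) ^ 2 * stdPDF x) x
      + m ^ 2 * ((Iic (lam - m)).indicator stdPDF x - (Iic (-lam - m)).indicator stdPDF x) := by
  rcases lt_or_ge (lam - m) x with hx | hx
  · rw [soft_of_lt hlam (by linarith)]
    simp only [indicator_apply, mem_Iic, hx.not_ge, show ¬ x ≤ -lam - m by linarith, if_false]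
    ring
  rcases le_or_gt x (-lam - m) with hx' | hx'
  · rw [soft_of_le_neg hlam (by linarith)]
    simp only [indicator_apply, mem_Iic, hx, hx', if_true]
    ring
  · rw [soft_of_abs_le (abs_le.2 ⟨by linarith, by linarith⟩)]
    simp only [indicator_apply, mem_Iic, hx, hx'.not_ge, if_true, if_false]
    ring

lemma softRisk_eq (hlam : 0 ≤ lam) (m : ℝ) :
    softRisk m lam =
      (∫ x, (x - lam) ^ 2 * stdPDF x) - (∫ x in Iic (lam - m), (x - lam) ^ 2 * stdPDF x)
      + (∫ x in Iic (-lam - m), (x + lam) ^ 2 * stdPDF x)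
      + m ^ 2 * ((∫ x in Iic (lam - m), stdPDF x) - ∫ x in Iic (-lam - m), stdPDF x) := by
  have h₁ := integrable_sub_sq_mul_stdPDF lam
  have h₂ := integrable_add_sq_mul_stdPDF lam
  have h₁c := h₁.indicator (measurableSet_Iic (a := lam - m))
  have h₂c := h₂.indicator (measurableSet_Iic (a := -lam - m))
  have hΦ (c : ℝ) := integrable_stdPDF.indicator (measurableSet_Iic (a := c))
  simp only [softRisk, soft_add_sub_sq_mul_stdPDF_eq hlam m]
  rw [integral_add (by fun_prop) (by fun_prop), integral_add (by fun_prop) h₂c,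
    integral_sub h₁ h₁c, integral_const_mul, integral_sub (hΦ _) (hΦ _),
    integral_indicator measurableSet_Iic, integral_indicator measurableSet_Iic,
    integral_indicator measurableSet_Iic, integral_indicator measurableSet_Iic]

lemma hasDerivAt_softRisk (hlam : 0 ≤ lam) (mu : ℝ) :
    HasDerivAt (fun m => softRisk m lam)
      (2 * mu * ((∫ x in Iic (lam - mu), stdPDF x) - ∫ x in Iic (-lam - mu), stdPDF x)) mu := by
  have hr : HasDerivAt (fun m : ℝ => lam - m) (-1) mu := (hasDerivAt_id mu).const_sub lam
  have hl : HasDerivAt (fun m : ℝ => -lam - m) (-1) mu := (hasDerivAt_id mu).const_sub (-lam)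
  have hG₁ := hr.integral_Iic (by fun_prop) (integrable_sub_sq_mul_stdPDF lam)
  have hG₂ := hl.integral_Iic (by fun_prop) (integrable_add_sq_mul_stdPDF lam)
  have hΦ₁ := hr.integral_Iic continuous_stdPDF integrable_stdPDF
  have hΦ₂ := hl.integral_Iic continuous_stdPDF integrable_stdPDF
  rw [funext (softRisk_eq hlam)]
  refine ((((hasDerivAt_const mu (∫ x, (x - lam) ^ 2 * stdPDF x)).fun_sub hG₁).fun_add hG₂).fun_add
    ((hasDerivAt_pow 2 mu).fun_mul (hΦ₁.fun_sub hΦ₂))).congr_deriv ?_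
  push_cast
  ring

lemma softRisk_le_softRisk_zero_add_sq (hlam : 0 ≤ lam) (mu : ℝ) :
    softRisk mu lam ≤ softRisk 0 lam + mu ^ 2 := by
  calc softRisk mu lam ≤ ∫ x, ((soft lam (x + 0) - 0) ^ 2 * stdPDF x + mu ^ 2 * stdPDF x) :=
        integral_mono (integrable_softRisk_integrand hlam mu)
          ((integrable_softRisk_integrand hlam 0).add (integrable_stdPDF.const_mul _)) fun x => by
            simpa only [add_zero, sub_zero, ← add_mul] using
              mul_le_mul_of_nonneg_right (sq_soft_add_sub_le hlam x mu) (stdPDF_nonneg x)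
    _ = softRisk 0 lam + mu ^ 2 := by
        rw [integral_add (integrable_softRisk_integrand hlam 0) (integrable_stdPDF.const_mul _),
          integral_const_mul, integral_stdPDF, mul_one, softRisk]

lemma softRisk_le_sq_add_one (hlam : 0 ≤ lam) (mu : ℝ) : softRisk mu lam ≤ lam ^ 2 + 1 := by
  set f := fun x => (soft lam (x + mu) - mu) ^ 2 * stdPDF x
  have hf : Integrable f := integrable_softRisk_integrand hlam mu
  have hpair (x : ℝ) : f x + f (-x) ≤ 2 * (x ^ 2 * stdPDF x) + 2 * lam ^ 2 * stdPDF x := by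
    have h := add_sq_add_neg_add_sq_le_of_antitone (antitone_soft_sub_self hlam)
      (abs_soft_sub_self_le hlam) x mu
    have hshift (y : ℝ) : y + (soft lam (y + mu) - (y + mu)) = soft lam (y + mu) - mu := by ring
    rw [hshift, hshift] at h
    have := mul_le_mul_of_nonneg_right h (stdPDF_nonneg x)
    simp only [f, stdPDF_neg]
    linarith
  suffices 2 * softRisk mu lam ≤ 2 * (lam ^ 2 + 1) by linarith
  calc 2 * softRisk mu lam = ∫ x, (f x + f (-x)) := by
        rw [integral_add hf hf.comp_neg, integral_neg_eq_self, softRisk, two_mul]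
    _ ≤ ∫ x, (2 * (x ^ 2 * stdPDF x) + 2 * lam ^ 2 * stdPDF x) :=
        integral_mono (hf.add hf.comp_neg)
          ((integrable_sq_mul_stdPDF.const_mul 2).add (integrable_stdPDF.const_mul _)) hpair
    _ = 2 * (lam ^ 2 + 1) := by
        rw [integral_add (integrable_sq_mul_stdPDF.const_mul 2) (integrable_stdPDF.const_mul _),
          integral_const_mul, integral_const_mul, integral_sq_mul_stdPDF, integral_stdPDF]
        ring

end SoftRisk

theorem stmt6 (lam : ℝ) (hlam : 0 ≤ lam) :
    (∀ mu : ℝ, HasDerivAt (fun m => softRisk m lam)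
      (2 * mu * ∫ x in {x : ℝ | |x + mu| ≤ lam}, stdPDF x) mu) ∧
    (∀ mu : ℝ, softRisk mu lam ≤ softRisk 0 lam + min (mu^2) (lam^2 + 1)) := by
  refine ⟨fun mu => ?_, fun mu => ?_⟩
  · have hset : {x : ℝ | |x + mu| ≤ lam} = Icc (-lam - mu) (lam - mu) := by
      ext x
      simp only [mem_ofPred_eq, mem_Icc, abs_le]
      constructor <;> rintro ⟨h₁, h₂⟩ <;> constructor <;> linarith
    rw [hset, integral_Icc_eq_integral_Ioc, ← intervalIntegral.integral_of_le (by linarith),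
      ← intervalIntegral.integral_Iic_sub_Iic integrable_stdPDF.integrableOn
        integrable_stdPDF.integrableOn]
    exact hasDerivAt_softRisk hlam mu
  · have hR₀ : 0 ≤ softRisk 0 lam :=
      integral_nonneg fun x => mul_nonneg (sq_nonneg _) (stdPDF_nonneg x)
    rw [add_min]
    exact le_min (softRisk_le_softRisk_zero_add_sq hlam mu)
      ((softRisk_le_sq_add_one hlam mu).trans (le_add_of_nonneg_left hR₀))
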